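/- arXiv:2309.01485 — 10 statements merged into one kernel-verified Lean document; each statement's English description precedes it below -/
import Mathlib

section
/- For all u, v ∈ ℤ^n one has h_{u+v} = h_u · h_v and h_u = ∏_{1 ≤ i ≤ n} h_{e_i}^{u_i}. -/
open scoped BigOperators

noncomputable section

/-- The structure coefficient `q^⟨u|v⟩ = ∏_{i<j} q_{ij}^{u_j v_i}` for `u v : Fin n → ℤ`. -/
def qpowZ {K : Type*} [Field K] {n : ℕ} (q : Fin n → Fin n → K) (u v : Fin n → ℤ) : K :=
  ∏ i : Fin n, ∏ j : Fin n, if i < j then q i j ^ (u j * v i) else 1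

/-- The `i`-th standard basis vector of `ℤ^n`. -/
def eZ {n : ℕ} (i : Fin n) : Fin n → ℤ := fun t => if t = i then 1 else 0

/-- `h_v = q^⟨a-1-v|v⟩ · (q^⟨v|a-1-v⟩)⁻¹`. -/
def hCoef {K : Type*} [Field K] {n : ℕ} (q : Fin n → Fin n → K) (a : Fin n → ℕ)
    (v : Fin n → ℤ) : K :=
  qpowZ q (fun i => (a i : ℤ) - 1 - v i) v *
    (qpowZ q v (fun i => (a i : ℤ) - 1 - v i))⁻¹

/-!
The exponent of `q_{ij}` (for `i < j`) in `h_v` is `(a_j - 1) v_i - (a_i - 1) v_j`: the quadratic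
terms `v_j v_i` of the two structure coefficients cancel. So `h_v` is a product of fixed nonzero
bases raised to additive functions of `v`, and any such product is multiplicative in `v` and
determined by its values on the standard basis.
-/

section ZpowOfAdditive

variable {G₀ : Type*} [CommGroupWithZero G₀] {ι : Type*} [Fintype ι]

theorem Finset.prod_zpow_eq_zpow_sum₀ {α : Type*} (s : Finset α) {x : G₀} (hx : x ≠ 0)
    (f : α → ℤ) : ∏ k ∈ s, x ^ f k = x ^ ∑ k ∈ s, f k := by
  classical
  induction s using Finset.induction with
  | empty => simp
  | insert k s hk ih => rw [Finset.prod_insert hk, Finset.sum_insert hk, ih, zpow_add₀ hx]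

theorem prod_zpow_map_add {M : Type*} [AddCommMonoid M] (x : ι → G₀) (hx : ∀ k, x k ≠ 0)
    (ℓ : ι → M →+ ℤ) (u v : M) :
    ∏ k, x k ^ ℓ k (u + v) = (∏ k, x k ^ ℓ k u) * ∏ k, x k ^ ℓ k v := by
  simp only [map_add, zpow_add₀ (hx _), Finset.prod_mul_distrib]

theorem prod_zpow_map_eq_prod_single {κ : Type*} [Fintype κ] [DecidableEq κ] (x : ι → G₀)
    (hx : ∀ k, x k ≠ 0) (ℓ : ι → (κ → ℤ) →+ ℤ) (u : κ → ℤ) :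
    ∏ k, x k ^ ℓ k u = ∏ i, (∏ k, x k ^ ℓ k (Pi.single i 1)) ^ u i := by
  have hℓ : ∀ k, ℓ k u = ∑ i, ℓ k (Pi.single i 1) * u i := fun k => by
    conv_lhs => rw [pi_eq_sum_univ' u]
    simp only [map_sum, map_zsmul, smul_eq_mul, mul_comm]
  calc ∏ k, x k ^ ℓ k u = ∏ k, ∏ i, (x k ^ ℓ k (Pi.single i 1)) ^ u i := by
        simp only [hℓ, ← Finset.prod_zpow_eq_zpow_sum₀ _ (hx _), zpow_mul]
    _ = ∏ i, (∏ k, x k ^ ℓ k (Pi.single i 1)) ^ u i := by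
        rw [Finset.prod_comm]
        simp only [Finset.prod_zpow]

end ZpowOfAdditive

def hExp {n : ℕ} (a : Fin n → ℕ) (i j : Fin n) : (Fin n → ℤ) →+ ℤ where
  toFun v := ((a j : ℤ) - 1) * v i - ((a i : ℤ) - 1) * v j
  map_zero' := by simp
  map_add' u v := by simp only [Pi.add_apply]; ring

theorem hCoef_eq_prod_zpow_hExp {K : Type*} [Field K] {n : ℕ} (q : Fin n → Fin n → K)
    (a : Fin n → ℕ) (hq0 : ∀ i j, q i j ≠ 0) (v : Fin n → ℤ) :
    hCoef q a v =
      ∏ p : Fin n × Fin n, (if p.1 < p.2 then q p.1 p.2 else 1) ^ hExp a p.1 p.2 v := by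
  rw [Fintype.prod_prod_type, hCoef, qpowZ, qpowZ, ← Finset.prod_inv_distrib,
    ← Finset.prod_mul_distrib]
  refine Finset.prod_congr rfl fun i _ => ?_
  rw [← Finset.prod_inv_distrib, ← Finset.prod_mul_distrib]
  refine Finset.prod_congr rfl fun j _ => ?_
  split_ifs
  · rw [← zpow_neg, ← zpow_add₀ (hq0 i j), hExp, AddMonoidHom.coe_mk, ZeroHom.coe_mk]
    ring_nf
  · simp

theorem eZ_eq_single {n : ℕ} (i : Fin n) : eZ i = Pi.single i 1 := by
  ext t
  simp [eZ, Pi.single_apply]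

theorem stmt4_general {K : Type*} [Field K] {n : ℕ}
    (q : Fin n → Fin n → K) (a : Fin n → ℕ)
    (hq0 : ∀ i j, q i j ≠ 0)
    (u v : Fin n → ℤ) :
    hCoef q a (u + v) = hCoef q a u * hCoef q a v ∧
    hCoef q a u = ∏ i : Fin n, (hCoef q a (eZ i)) ^ (u i) := by
  have hbase : ∀ p : Fin n × Fin n, (if p.1 < p.2 then q p.1 p.2 else 1) ≠ 0 := fun p => by
    split_ifs
    exacts [hq0 _ _, one_ne_zero]
  simp only [hCoef_eq_prod_zpow_hExp q a hq0, eZ_eq_single]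
  exact ⟨prod_zpow_map_add _ hbase (fun p => hExp a p.1 p.2) u v,
    prod_zpow_map_eq_prod_single _ hbase (fun p => hExp a p.1 p.2) u⟩

theorem stmt4 {K : Type*} [Field K] {n : ℕ} (hn : 1 ≤ n)
    (q : Fin n → Fin n → K) (a : Fin n → ℕ)
    (hq0 : ∀ i j, q i j ≠ 0) (hqii : ∀ i, q i i = 1)
    (hqsym : ∀ i j, q i j * q j i = 1) (ha : ∀ i, 2 ≤ a i)
    (u v : Fin n → ℤ) :
    hCoef q a (u + v) = hCoef q a u * hCoef q a v ∧
    hCoef q a u = ∏ i : Fin n, (hCoef q a (eZ i)) ^ (u i) :=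
  stmt4_general q a hq0 u v
end
end

section
/- If π is a compatible permutation with (q,a), then for all u, v ∈ ℤ^n one has q^⟨π·v|π·u⟩ = q^⟨u|v⟩ · ∏_{1 ≤ j < k ≤ n} (q^⟨π·e_k|π·e_j⟩)^{u_j v_k + u_k v_j}. -/
open scoped BigOperators

noncomputable section

/-- The action of a permutation `π` on `ℤ^n`: `(π·v)_i = v_{π⁻¹(i)}`. -/
def pAct {n : ℕ} (π : Equiv.Perm (Fin n)) (v : Fin n → ℤ) : Fin n → ℤ :=
  fun i => v (π.symm i)

/-- `π` is a compatible permutation with `(q, a)`. -/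
def Compatible {K : Type*} [Field K] {n : ℕ} (q : Fin n → Fin n → K) (a : Fin n → ℕ)
    (π : Equiv.Perm (Fin n)) : Prop :=
  (∀ i, a (π i) = a i) ∧ (∀ i j, q (π i) (π j) = q j i)

lemma qpowZ_e {K : Type*} [Field K] {n : ℕ} (q : Fin n → Fin n → K) (b c : Fin n) :
    qpowZ q (eZ b) (eZ c) = if c < b then q c b else 1 := by
  unfold qpowZ eZ
  rw [Finset.prod_eq_single c ?_ (by simp)]
  · rw [Finset.prod_eq_single b ?_ (by simp)]
    · simp
    · intro j _ hj
      simp [hj]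
  · intro i _ hi
    apply Finset.prod_eq_one
    intro j _
    simp [hi]

lemma prod_pairing {M : Type*} [CommMonoid M] {n : ℕ} (F G : Fin n → Fin n → M)
    (hdiag : ∀ j, F j j = 1)
    (h : ∀ j k, j < k → F j k * F k j = G j k)
    (hG : ∀ j k, ¬ j < k → G j k = 1) :
    ∏ j, ∏ k, F j k = ∏ j, ∏ k, G j k := by
  have step1 : ∏ j, ∏ k, F j k
      = ∏ j, ∏ k, ((if j < k then F j k else 1) * (if k < j then F j k else 1)) := by
    apply Finset.prod_congr rfl; intro j _
    apply Finset.prod_congr rfl; intro k _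
    rcases lt_trichotomy j k with hlt | heq | hgt
    · rw [if_pos hlt, if_neg (asymm hlt), mul_one]
    · subst heq; rw [if_neg (lt_irrefl j), one_mul, hdiag]
    · rw [if_neg (asymm hgt), if_pos hgt, one_mul]
  rw [step1]
  have step2 : (∏ j, ∏ k, ((if j < k then F j k else 1) * (if k < j then F j k else 1)))
      = (∏ j, ∏ k, (if j < k then F j k else 1)) * (∏ j, ∏ k, (if k < j then F j k else 1)) := by
    rw [← Finset.prod_mul_distrib]
    apply Finset.prod_congr rfl; intro j _
    rw [← Finset.prod_mul_distrib]
  rw [step2]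
  have step3 : (∏ j, ∏ k, (if k < j then F j k else 1))
      = ∏ j, ∏ k, (if j < k then F k j else 1) := by
    exact Finset.prod_comm
  rw [step3, ← Finset.prod_mul_distrib]
  apply Finset.prod_congr rfl; intro j _
  rw [← Finset.prod_mul_distrib]
  apply Finset.prod_congr rfl; intro k _
  by_cases hlt : j < k
  · rw [if_pos hlt, if_pos hlt, h j k hlt]
  · rw [if_neg hlt, if_neg hlt, one_mul, hG j k hlt]

theorem stmt9 {K : Type*} [Field K] {n : ℕ} (hn : 1 ≤ n)
    (q : Fin n → Fin n → K) (a : Fin n → ℕ)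
    (hq0 : ∀ i j, q i j ≠ 0) (hqii : ∀ i, q i i = 1)
    (hqsym : ∀ i j, q i j * q j i = 1) (ha : ∀ i, 2 ≤ a i)
    (π : Equiv.Perm (Fin n)) (hcomp : Compatible q a π)
    (u v : Fin n → ℤ) :
    qpowZ q (pAct π v) (pAct π u) =
      qpowZ q u v *
        ∏ j : Fin n, ∏ k : Fin n,
          if j < k then (qpowZ q (eZ (π k)) (eZ (π j))) ^ (u j * v k + u k * v j)
          else 1 := by
  have hL : qpowZ q (pAct π v) (pAct π u)
      = ∏ j, ∏ k, (if π j < π k then q (π j) (π k) ^ (v k * u j) else 1) := by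
    unfold qpowZ pAct
    rw [← Equiv.prod_comp π]
    apply Finset.prod_congr rfl; intro j _
    rw [← Equiv.prod_comp π]
    simp
  have hR : (qpowZ q u v *
      ∏ j : Fin n, ∏ k : Fin n,
        (if j < k then (qpowZ q (eZ (π k)) (eZ (π j))) ^ (u j * v k + u k * v j) else 1))
      = ∏ j, ∏ k, ((if j < k then q j k ^ (u k * v j) else 1) *
          (if j < k then (if π j < π k then q (π j) (π k) else 1) ^ (u j * v k + u k * v j)
            else 1)) := by
    unfold qpowZ eZ
    rw [← Finset.prod_mul_distrib]
    apply Finset.prod_congr rfl; intro j _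
    rw [← Finset.prod_mul_distrib]
    apply Finset.prod_congr rfl; intro k _
    congr 1
    have := qpowZ_e q (π k) (π j)
    unfold qpowZ eZ at this
    rw [this]
  rw [hL, hR]
  apply prod_pairing
  · intro j; simp
  · intro j k hjk
    have hne : π j ≠ π k := fun hh => (ne_of_lt hjk) (π.injective hh)
    rw [if_pos hjk, if_pos hjk]
    rcases lt_trichotomy (π j) (π k) with hlt | heq | hgt
    · rw [if_pos hlt, if_neg (asymm hlt), if_pos hlt, mul_one, hcomp.2 j k,
        eq_inv_of_mul_eq_one_left (hqsym j k), inv_zpow, ← zpow_neg,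
        ← zpow_add₀ (hq0 k j)]
      congr 1; ring
    · exact absurd heq hne
    · rw [if_neg (asymm hgt), if_pos hgt, if_neg (asymm hgt), one_mul, one_zpow, mul_one,
        hcomp.2 k j]
      congr 1; ring
  · intro j k hjk
    rw [if_neg hjk, if_neg hjk, one_mul]
end
end

section
/- If π is a compatible permutation with (q,a), then h_v · h_{π·v} = 1 for all v ∈ ℤ^n. -/
open scoped BigOperators

noncomputable section

/-!
With `w = a - 1 - v`, `h_v = ∏_{i<j} q_{ij}^{E_{ij}}` where `E_{ij} = w_j v_i - v_j w_i`.
Since `E` and `q` are both antisymmetric (multiplicatively for `q`), the factor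
`q_{ij}^{E_{ij}}` is symmetric in `i, j`, so `h_v` is really a product over unordered pairs.
For `π·v` the exponents are `E` pulled back along `π⁻¹` (as `a ∘ π = a`); reindexing by `π`
and using `q_{π i, π j} = q_{ji} = q_{ij}⁻¹` turns `h_{π·v}` into the inverse of the same
product over unordered pairs, now ordered by `π` rather than by `<`, which does not matter.
-/

open Finset

theorem Finset.prod_filter_comp_lt_of_symm {ι β M : Type*} [Fintype ι] [LinearOrder ι]
    [LinearOrder β] [CommMonoid M] {f : ι → β} (hf : Function.Injective f)
    {G : ι → ι → M} (hG : ∀ i j, G i j = G j i) :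
    ∏ p : ι × ι with f p.1 < f p.2, G p.1 p.2 = ∏ p : ι × ι with p.1 < p.2, G p.1 p.2 := by
  refine prod_nbij' (fun p => if p.1 < p.2 then p else p.swap)
    (fun p => if f p.1 < f p.2 then p else p.swap) ?_ ?_ ?_ ?_ ?_
  all_goals
    simp only [Prod.forall, mem_filter, mem_univ, true_and]
    intro i j
    split_ifs <;> grind [hf.eq_iff]

section

variable {K : Type*} [Field K] {n : ℕ} {q : Fin n → Fin n → K}

theorem hCoef_eq_prod (hq : ∀ i j, q i j ≠ 0) (a : Fin n → ℕ) (v : Fin n → ℤ) :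
    hCoef q a v = ∏ p : Fin n × Fin n with p.1 < p.2,
      q p.1 p.2 ^ (((a p.2 : ℤ) - 1 - v p.2) * v p.1 - v p.2 * ((a p.1 : ℤ) - 1 - v p.1)) := by
  rw [hCoef, qpowZ, qpowZ, ← prod_inv_distrib, ← prod_mul_distrib, prod_filter,
    Fintype.prod_prod_type]
  refine prod_congr rfl fun i _ => ?_
  rw [← prod_inv_distrib, ← prod_mul_distrib]
  refine prod_congr rfl fun j _ => ?_
  split_ifs
  · rw [← zpow_neg, ← zpow_add₀ (hq i j), ← sub_eq_add_neg]
  · exact mul_inv_cancel₀ one_ne_zero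

theorem hCoef_ne_zero (hq : ∀ i j, q i j ≠ 0) (a : Fin n → ℕ) (v : Fin n → ℤ) :
    hCoef q a v ≠ 0 := by
  rw [hCoef_eq_prod hq]
  exact prod_ne_zero_iff.mpr fun p _ => zpow_ne_zero _ (hq p.1 p.2)

theorem hCoef_pAct (hq : ∀ i j, q i j * q j i = 1) {a : Fin n → ℕ} {π : Equiv.Perm (Fin n)}
    (hπ : Compatible q a π) (v : Fin n → ℤ) :
    hCoef q a (pAct π v) = (hCoef q a v)⁻¹ := by
  have hq0 : ∀ i j, q i j ≠ 0 := fun i j => left_ne_zero_of_mul_eq_one (hq i j)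
  have ha : ∀ i, (a (π.symm i) : ℤ) = a i := fun i => by
    rw [← hπ.1 (π.symm i), Equiv.apply_symm_apply]
  set E : Fin n → Fin n → ℤ := fun i j => ((a j : ℤ) - 1 - v j) * v i - v j * ((a i : ℤ) - 1 - v i)
  have hsymm : ∀ i j, q i j ^ E i j = q j i ^ E j i := fun i j => by
    rw [eq_inv_of_mul_eq_one_right (hq j i), show E j i = -E i j by ring, inv_zpow, zpow_neg]
  calc hCoef q a (pAct π v)
      = ∏ p : Fin n × Fin n with p.1 < p.2, q p.1 p.2 ^ E (π.symm p.1) (π.symm p.2) := by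
        simp only [hCoef_eq_prod hq0, pAct, E, ha]
    _ = ∏ p : Fin n × Fin n with π p.1 < π p.2, q (π p.1) (π p.2) ^ E p.1 p.2 := by
        refine (prod_equiv (π.prodCongr π) (by simp) fun p _ => ?_).symm
        simp
    _ = (∏ p : Fin n × Fin n with π p.1 < π p.2, q p.1 p.2 ^ E p.1 p.2)⁻¹ := by
        rw [← prod_inv_distrib]
        refine prod_congr rfl fun p _ => ?_
        rw [hπ.2, eq_inv_of_mul_eq_one_right (hq p.1 p.2), inv_zpow]
    _ = (hCoef q a v)⁻¹ := by
        rw [prod_filter_comp_lt_of_symm π.injective hsymm, hCoef_eq_prod hq0]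

end

theorem stmt10_general {K : Type*} [Field K] {n : ℕ}
    (q : Fin n → Fin n → K) (a : Fin n → ℕ)
    (hqsym : ∀ i j, q i j * q j i = 1)
    (π : Equiv.Perm (Fin n)) (hcomp : Compatible q a π)
    (v : Fin n → ℤ) :
    hCoef q a v * hCoef q a (pAct π v) = 1 := by
  rw [hCoef_pAct hqsym hcomp]
  exact mul_inv_cancel₀ (hCoef_ne_zero (fun i j => left_ne_zero_of_mul_eq_one (hqsym i j)) a v)

theorem stmt10 {K : Type*} [Field K] {n : ℕ} (hn : 1 ≤ n)
    (q : Fin n → Fin n → K) (a : Fin n → ℕ)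
    (hq0 : ∀ i j, q i j ≠ 0) (hqii : ∀ i, q i i = 1)
    (hqsym : ∀ i j, q i j * q j i = 1) (ha : ∀ i, 2 ≤ a i)
    (π : Equiv.Perm (Fin n)) (hcomp : Compatible q a π)
    (v : Fin n → ℤ) :
    hCoef q a v * hCoef q a (pAct π v) = 1 :=
  stmt10_general q a hqsym π hcomp v
end
end

section
/- If π is a compatible permutation with (q,a) satisfying π² = Id, and I = {i : π(i) = i}, then for every i ∈ I one has h_{e_i} = ∏_{j ∈ I} q_{ij}^{a_j − 1}, where h_{e_i} = ∏_{1 ≤ j ≤ n} q_{ij}^{a_j − 1}. -/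
open scoped BigOperators

noncomputable section

/-- `h_{e_i} = ∏_{1 ≤ j ≤ n} q_{ij}^{a_j - 1}`. -/
def hei {K : Type*} [Field K] {n : ℕ} (q : Fin n → Fin n → K) (a : Fin n → ℕ)
    (i : Fin n) : K :=
  ∏ j : Fin n, q i j ^ (a j - 1)

theorem stmt12 {K : Type*} [Field K] {n : ℕ} (hn : 1 ≤ n)
    (q : Fin n → Fin n → K) (a : Fin n → ℕ)
    (hq0 : ∀ i j, q i j ≠ 0) (hqii : ∀ i, q i i = 1)
    (hqsym : ∀ i j, q i j * q j i = 1) (ha : ∀ i, 2 ≤ a i)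
    (π : Equiv.Perm (Fin n)) (hcomp : Compatible q a π)
    (hπ2 : ∀ i, π (π i) = i) :
    ∀ i, π i = i →
      hei q a i = ∏ j ∈ Finset.univ.filter (fun j => π j = j), q i j ^ (a j - 1) := by
  intro i hi
  obtain ⟨haeq, hqeq⟩ := hcomp
  have key : ∏ j ∈ Finset.univ.filter (fun j => ¬ π j = j), q i j ^ (a j - 1) = 1 := by
    refine Finset.prod_involution (fun j _ => π j) ?_ ?_ ?_ ?_
    · intro j hj
      have h1 : q i (π j) = q j i := by
        conv_lhs => rw [← hi]
        exact hqeq i j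
      rw [haeq j, h1, ← mul_pow, hqsym, one_pow]
    · intro j hj hne
      simp only [Finset.mem_filter] at hj
      exact hj.2
    · intro j hj
      simp only [Finset.mem_filter, Finset.mem_univ, true_and] at hj ⊢
      intro h
      rw [hπ2 j] at h
      exact hj h.symm
    · intro j hj; exact hπ2 j
  rw [hei, ← Finset.prod_filter_mul_prod_filter_not Finset.univ (fun j => π j = j), key, mul_one]
end
end

section
/- If π is a compatible permutation with (q,a) satisfying π² = Id, and I = {i : π(i) = i}, then q_π := ∏_{1 ≤ j < k ≤ n} (q^⟨π·e_k|π·e_j⟩)^{(a_k−1)(a_j−1)} equals ∏_{j, k ∈ I, j < k} q_{kj}^{(a_k−1)(a_j−1)}, and q_π² = 1 (i.e., q_π = ±1). -/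
open scoped BigOperators

noncomputable section

/-- `q_π = ∏_{j<k} (q^⟨π·e_k|π·e_j⟩)^{(a_k-1)(a_j-1)}`. -/
def qPi {K : Type*} [Field K] {n : ℕ} (q : Fin n → Fin n → K) (a : Fin n → ℕ)
    (π : Equiv.Perm (Fin n)) : K :=
  ∏ j : Fin n, ∏ k : Fin n,
    if j < k then (qpowZ q (eZ (π k)) (eZ (π j))) ^ ((a k - 1) * (a j - 1)) else 1

lemma qpow_e {K : Type*} [Field K] {n : ℕ} (q : Fin n → Fin n → K) (p r : Fin n) :
    qpowZ q (eZ p) (eZ r) = if r < p then q r p else 1 := by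
  unfold qpowZ eZ
  rw [Finset.prod_eq_single r (fun i _ hi => Finset.prod_eq_one (fun j _ => by simp [hi]))
    (by simp)]
  rw [Finset.prod_eq_single p (fun j _ hj => by simp [hj]) (by simp)]
  simp

theorem stmt13 {K : Type*} [Field K] {n : ℕ} (hn : 1 ≤ n)
    (q : Fin n → Fin n → K) (a : Fin n → ℕ)
    (hq0 : ∀ i j, q i j ≠ 0) (hqii : ∀ i, q i i = 1)
    (hqsym : ∀ i j, q i j * q j i = 1) (ha : ∀ i, 2 ≤ a i)
    (π : Equiv.Perm (Fin n)) (hcomp : Compatible q a π)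
    (hπ2 : ∀ i, π (π i) = i) :
    (qPi q a π =
      ∏ j : Fin n, ∏ k : Fin n,
        if π j = j ∧ π k = k ∧ j < k then q k j ^ ((a k - 1) * (a j - 1)) else 1) ∧
    (qPi q a π) ^ 2 = 1 := by
  classical
  obtain ⟨ha', hq'⟩ := hcomp
  have key : qPi q a π = ∏ j : Fin n, ∏ k : Fin n,
      (if j < k ∧ π j < π k then q k j ^ ((a k - 1) * (a j - 1)) else 1) := by
    unfold qPi
    refine Finset.prod_congr rfl fun j _ => Finset.prod_congr rfl fun k _ => ?_
    rw [qpow_e]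
    by_cases h1 : j < k
    · by_cases h2 : π j < π k
      · simp [h1, h2, hq' j k]
      · simp [h1, h2]
    · simp [h1]
  have main : (∏ j : Fin n, ∏ k : Fin n,
      (if j < k ∧ π j < π k then q k j ^ ((a k - 1) * (a j - 1)) else 1))
      = ∏ j : Fin n, ∏ k : Fin n,
        (if π j = j ∧ π k = k ∧ j < k then q k j ^ ((a k - 1) * (a j - 1)) else 1) := by
    rw [← Finset.prod_product', ← Finset.prod_product']
    set s := (Finset.univ ×ˢ Finset.univ : Finset (Fin n × Fin n)) with hs
    set F : Fin n × Fin n → K := fun p =>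
      if p.1 < p.2 ∧ π p.1 < π p.2 then q p.2 p.1 ^ ((a p.2 - 1) * (a p.1 - 1)) else 1 with hF
    set G : Fin n × Fin n → K := fun p =>
      if π p.1 = p.1 ∧ π p.2 = p.2 ∧ p.1 < p.2 then q p.2 p.1 ^ ((a p.2 - 1) * (a p.1 - 1))
      else 1 with hG
    show ∏ p ∈ s, F p = ∏ p ∈ s, G p
    set P : Fin n × Fin n → Prop := fun p => π p.1 = p.1 ∧ π p.2 = p.2 with hP
    rw [← Finset.prod_filter_mul_prod_filter_not s P F,
        ← Finset.prod_filter_mul_prod_filter_not s P G]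
    have h1 : ∀ p ∈ s.filter P, F p = G p := by
      intro p hp
      rw [Finset.mem_filter] at hp
      obtain ⟨-, hp1, hp2⟩ := hp
      simp only [hF, hG, hp1, hp2, true_and, and_self]
    have h2 : ∏ p ∈ s.filter (fun p => ¬ P p), F p = 1 := by
      refine Finset.prod_involution (fun p _ => (π p.1, π p.2)) ?_ ?_ ?_ ?_
      · intro p hp
        by_cases hc : p.1 < p.2 ∧ π p.1 < π p.2
        · have hc' : (π p.1, π p.2).1 < (π p.1, π p.2).2 ∧
              π (π p.1, π p.2).1 < π (π p.1, π p.2).2 := by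
            refine ⟨hc.2, ?_⟩
            simp only [hπ2]
            exact hc.1
          simp only [hF, if_pos hc, if_pos hc']
          rw [hq' p.2 p.1, ha' p.1, ha' p.2, ← mul_pow, hqsym, one_pow]
        · have hc' : ¬ ((π p.1, π p.2).1 < (π p.1, π p.2).2 ∧
              π (π p.1, π p.2).1 < π (π p.1, π p.2).2) := by
            simp only [hπ2]
            rw [and_comm]
            exact hc
          simp only [hF, if_neg hc, if_neg hc', one_mul]
      · intro p hp _
        rw [Finset.mem_filter] at hp
        intro hcon
        apply hp.2
        constructor
        · exact congrArg Prod.fst hcon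
        · exact congrArg Prod.snd hcon
      · intro p hp
        rw [Finset.mem_filter] at hp ⊢
        refine ⟨by simp [hs], ?_⟩
        intro hcon
        apply hp.2
        obtain ⟨c1, c2⟩ := hcon
        simp only [hπ2] at c1 c2
        exact ⟨c1.symm, c2.symm⟩
      · intro p hp
        simp [hπ2]
    have h3 : ∏ p ∈ s.filter (fun p => ¬ P p), G p = 1 := by
      apply Finset.prod_eq_one
      intro p hp
      rw [Finset.mem_filter] at hp
      rw [hG]
      simp only
      rw [if_neg]
      intro hcon
      exact hp.2 ⟨hcon.1, hcon.2.1⟩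
    rw [Finset.prod_congr rfl h1, h2, h3]
  refine ⟨key.trans main, ?_⟩
  rw [key, main, ← Finset.prod_pow]
  apply Finset.prod_eq_one
  intro j _
  rw [← Finset.prod_pow]
  apply Finset.prod_eq_one
  intro k _
  by_cases hc : π j = j ∧ π k = k ∧ j < k
  · rw [if_pos hc, ← pow_mul, mul_comm _ 2, pow_mul]
    have hqq : q k j = q j k := by
      have h := hq' k j
      rwa [hc.1, hc.2.1] at h
    have hsq : q k j ^ 2 = 1 := by
      rw [sq]
      nth_rewrite 2 [hqq]
      exact hqsym k j
    rw [hsq, one_pow]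
  · rw [if_neg hc, one_pow]
end
end

section
/- Let V = {v ∈ ℕ^n : v_i ≤ a_i − 1 for all i} and let A be the free K-module with basis (x_v)_{v ∈ V}. For any choice of scalars g_{u,v} ∈ K indexed by pairs u, v ∈ V ∖ {0, a−1}, the K-linear maps ε and Δ defined on the basis by ε(x_v) = δ_{v,0}, Δ(x_0) = x_0 ⊗ x_0, Δ(x_v) = x_0 ⊗ x_v + x_v ⊗ x_0 for v ∈ V ∖ {0, a−1}, and Δ(x_{a−1}) = x_0 ⊗ x_{a−1} + x_{a−1} ⊗ x_0 + Σ_{u,v ∈ V∖{0,a−1}} g_{u,v} · x_u ⊗ x_v, satisfy coassociativity (Δ⊗id)∘Δ = (id⊗Δ)∘Δ and the counit laws (ε⊗id)∘Δ = id = (id⊗ε)∘Δ, so (A, Δ, ε) is a coassociative counital K-coalgebra; moreover each x_v with v ∈ V ∖ {0, a−1} is primitive (Δ(x_v) = x_0 ⊗ x_v + x_v ⊗ x_0 with x_0 the grouplike unit), so the K-subspace of primitive elements has dimension at least (∏_{1 ≤ i ≤ n} a_i) − 2. -/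
/-!
Every basis vector `z` is either the grouplike `e = x₀` or satisfies `Δ z = e ⊗ z + z ⊗ e + s`
with `s` in `N ⊗ N` for a space `N` of primitive elements killed by `ε`. For a primitive
tensor `p ⊗ q` one has `(Δ ⊗ id)(p ⊗ q) + p ⊗ q ⊗ e = e ⊗ p ⊗ q + (id ⊗ Δ)(p ⊗ q)`, and this
defect identity is exactly what makes the two sides of coassociativity agree on `z`; the counit
laws hold because `ε` kills every term of `Δ z` except `e ⊗ z` and `z ⊗ e`.
-/

open TensorProduct LinearMap Submodule

theorem map₂_mk_ker_le_ker_rTensor {R M P Q : Type*} [CommSemiring R] [AddCommMonoid M]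
    [Module R M] [AddCommMonoid P] [Module R P] [AddCommMonoid Q] [Module R Q]
    (f : M →ₗ[R] P) (N : Submodule R Q) :
    map₂ (TensorProduct.mk R M Q) (ker f) N ≤ ker (rTensor Q f) :=
  map₂_le.2 fun m hm n _ => by simp [mem_ker.1 hm]

theorem map₂_mk_ker_le_ker_lTensor {R M P Q : Type*} [CommSemiring R] [AddCommMonoid M]
    [Module R M] [AddCommMonoid P] [Module R P] [AddCommMonoid Q] [Module R Q]
    (f : M →ₗ[R] P) (N : Submodule R Q) :
    map₂ (TensorProduct.mk R Q M) N (ker f) ≤ ker (lTensor Q f) :=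
  map₂_le.2 fun _ _ n hn => by simp [mem_ker.1 hn]

theorem sum_ite_smul_tmul_mem_map₂ {R M P ι : Type*} [CommSemiring R] [AddCommMonoid M]
    [Module R M] [AddCommMonoid P] [Module R P] [Fintype ι] {f : ι → M} {f' : ι → P} {c : ι → ι → Prop}
    [∀ u w, Decidable (c u w)] (g : ι → ι → R) {N : Submodule R M} {N' : Submodule R P}
    (hc : ∀ u w, c u w → f u ∈ N ∧ f' w ∈ N') :
    ∑ u, ∑ w, (if c u w then g u w • (f u ⊗ₜ[R] f' w) else 0) ∈
      map₂ (TensorProduct.mk R M P) N N' := by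
  refine sum_mem fun u _ => sum_mem fun w _ => ?_
  split_ifs with h
  · exact smul_mem _ _ (apply_mem_map₂ _ (hc u w h).1 (hc u w h).2)
  · exact zero_mem _

theorem LinearIndependent.card_le_finrank_of_forall_mem {K M ι : Type*} [Semiring K]
    [StrongRankCondition K] [AddCommMonoid M] [Module K M] {f : ι → M} (hf : LinearIndependent K f) {s : Finset ι}
    {N : Submodule K M} [Module.Finite K N] (hs : ∀ i ∈ s, f i ∈ N) :
    s.card ≤ Module.finrank K N := by
  have hind : LinearIndependent K fun i : s => (⟨f i, hs i i.2⟩ : N) :=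
    LinearIndependent.of_comp N.subtype (hf.comp _ Subtype.val_injective)
  simpa using hind.fintype_card_le_finrank


section Coalgebra

variable {R A : Type*} [CommRing R] [AddCommGroup A] [Module R A]

def primitives (Δ : A →ₗ[R] A ⊗[R] A) (e : A) : Submodule R A :=
  ker (Δ - (TensorProduct.mk R A A e + (TensorProduct.mk R A A).flip e))

theorem mem_primitives {Δ : A →ₗ[R] A ⊗[R] A} {e y : A} :
    y ∈ primitives Δ e ↔ Δ y = e ⊗ₜ y + y ⊗ₜ e := by
  simp [primitives, sub_eq_zero]

def IsPrimitiveModulo (Δ : A →ₗ[R] A ⊗[R] A) (e : A) (N : Submodule R A) (z : A) : Prop :=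
  ∃ s ∈ map₂ (TensorProduct.mk R A A) N N, Δ z = e ⊗ₜ z + z ⊗ₜ e + s

theorem isPrimitiveModulo_of_mem_primitives {Δ : A →ₗ[R] A ⊗[R] A} {e z : A}
    (N : Submodule R A) (hz : z ∈ primitives Δ e) : IsPrimitiveModulo Δ e N z :=
  ⟨0, zero_mem _, by rw [add_zero, mem_primitives.1 hz]⟩

theorem coassoc_of_comul_eq_tmul_self {Δ : A →ₗ[R] A ⊗[R] A} {e : A} (he : Δ e = e ⊗ₜ e) :
    TensorProduct.assoc R A A A (rTensor A Δ (Δ e)) = lTensor A Δ (Δ e) := by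
  simp [he]

theorem coassoc_add_eq_of_mem_map₂_primitives {Δ : A →ₗ[R] A ⊗[R] A} {e : A} {s : A ⊗[R] A}
    (hs : s ∈ map₂ (TensorProduct.mk R A A) (primitives Δ e) (primitives Δ e)) :
    TensorProduct.assoc R A A A (rTensor A Δ s) + TensorProduct.assoc R A A A (s ⊗ₜ e) =
      e ⊗ₜ s + lTensor A Δ s := by
  let F : A ⊗[R] A →ₗ[R] A ⊗[R] (A ⊗[R] A) :=
    (TensorProduct.assoc R A A A).toLinearMap ∘ₗ
      (rTensor A Δ + (TensorProduct.mk R (A ⊗[R] A) A).flip e)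
  let G : A ⊗[R] A →ₗ[R] A ⊗[R] (A ⊗[R] A) := TensorProduct.mk R A (A ⊗[R] A) e + lTensor A Δ
  suffices s ∈ ker (F - G) by simpa [F, G, sub_eq_zero] using this
  refine map₂_le.2 (fun p hp q hq => ?_) hs
  rw [mem_primitives] at hp hq
  simp only [mem_ker, LinearMap.sub_apply, sub_eq_zero, F, G, coe_comp, Function.comp_apply,
    LinearMap.add_apply, TensorProduct.mk_apply, flip_apply, rTensor_tmul, lTensor_tmul, hp, hq,
    add_tmul, tmul_add, map_add, LinearEquiv.coe_coe, assoc_tmul]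
  abel

theorem coassoc_of_isPrimitiveModulo {Δ : A →ₗ[R] A ⊗[R] A} {e z : A} {N : Submodule R A}
    (he : Δ e = e ⊗ₜ e) (hN : N ≤ primitives Δ e) (hz : IsPrimitiveModulo Δ e N z) :
    TensorProduct.assoc R A A A (rTensor A Δ (Δ z)) = lTensor A Δ (Δ z) := by
  obtain ⟨s, hs, hΔz⟩ := hz
  have hdefect := coassoc_add_eq_of_mem_map₂_primitives (map₂_le_map₂ hN hN hs)
  rw [hΔz]
  simp only [map_add, rTensor_tmul, lTensor_tmul, he, hΔz, add_tmul, tmul_add, assoc_tmul,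
    eq_sub_of_add_eq hdefect]
  abel

theorem lid_rTensor_comul_of_isPrimitiveModulo {Δ : A →ₗ[R] A ⊗[R] A} {ε : A →ₗ[R] R}
    {e z : A} {N : Submodule R A} (hε : ε e = 1) (hN : N ≤ ker ε) (hεz : ε z = 0)
    (hz : IsPrimitiveModulo Δ e N z) :
    TensorProduct.lid R A (rTensor A ε (Δ z)) = z := by
  obtain ⟨s, hs, hΔz⟩ := hz
  have hs0 : rTensor A ε s = 0 := map₂_mk_ker_le_ker_rTensor ε N (map₂_le_map₂ hN le_rfl hs)
  simp [hΔz, hε, hεz, hs0]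

theorem rid_lTensor_comul_of_isPrimitiveModulo {Δ : A →ₗ[R] A ⊗[R] A} {ε : A →ₗ[R] R}
    {e z : A} {N : Submodule R A} (hε : ε e = 1) (hN : N ≤ ker ε) (hεz : ε z = 0)
    (hz : IsPrimitiveModulo Δ e N z) :
    TensorProduct.rid R A (lTensor A ε (Δ z)) = z := by
  obtain ⟨s, hs, hΔz⟩ := hz
  have hs0 : lTensor A ε s = 0 := map₂_mk_ker_le_ker_lTensor ε N (map₂_le_map₂ le_rfl hN hs)
  simp [hΔz, hε, hεz, hs0]

variable {ι : Type*} (x : Module.Basis ι R A) {Δ : A →ₗ[R] A ⊗[R] A} {ε : A →ₗ[R] R} {e : A}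
  {N : Submodule R A}

theorem coassoc_of_basis (he : Δ e = e ⊗ₜ e) (hN : N ≤ primitives Δ e)
    (hx : ∀ i, x i = e ∨ IsPrimitiveModulo Δ e N (x i)) (y : A) :
    TensorProduct.assoc R A A A (rTensor A Δ (Δ y)) = lTensor A Δ (Δ y) := by
  refine LinearMap.congr_fun (x.ext (f₁ := (TensorProduct.assoc R A A A).toLinearMap ∘ₗ
    rTensor A Δ ∘ₗ Δ) (f₂ := lTensor A Δ ∘ₗ Δ) fun i => ?_) y
  rcases hx i with hi | hi
  · simpa [hi] using coassoc_of_comul_eq_tmul_self he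
  · simpa using coassoc_of_isPrimitiveModulo he hN hi

theorem lid_rTensor_comul_of_basis (he : Δ e = e ⊗ₜ e) (hε : ε e = 1) (hN : N ≤ ker ε)
    (hx : ∀ i, x i = e ∨ ε (x i) = 0 ∧ IsPrimitiveModulo Δ e N (x i)) (y : A) :
    TensorProduct.lid R A (rTensor A ε (Δ y)) = y := by
  refine LinearMap.congr_fun (x.ext (f₁ := (TensorProduct.lid R A).toLinearMap ∘ₗ
    rTensor A ε ∘ₗ Δ) (f₂ := LinearMap.id) fun i => ?_) y
  rcases hx i with hi | ⟨hεi, hi⟩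
  · simp [hi, he, hε]
  · simpa using lid_rTensor_comul_of_isPrimitiveModulo hε hN hεi hi

theorem rid_lTensor_comul_of_basis (he : Δ e = e ⊗ₜ e) (hε : ε e = 1) (hN : N ≤ ker ε)
    (hx : ∀ i, x i = e ∨ ε (x i) = 0 ∧ IsPrimitiveModulo Δ e N (x i)) (y : A) :
    TensorProduct.rid R A (lTensor A ε (Δ y)) = y := by
  refine LinearMap.congr_fun (x.ext (f₁ := (TensorProduct.rid R A).toLinearMap ∘ₗ
    lTensor A ε ∘ₗ Δ) (f₂ := LinearMap.id) fun i => ?_) y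
  rcases hx i with hi | ⟨hεi, hi⟩
  · simp [hi, he, hε]
  · simpa using rid_lTensor_comul_of_isPrimitiveModulo hε hN hεi hi

end Coalgebra

theorem stmt14 {K : Type*} [Field K] {n : ℕ} (hn : 1 ≤ n)
    (a : Fin n → ℕ) (ha : ∀ i, 2 ≤ a i)
    -- `A` is the free `K`-module with basis `(x_v)_{v ∈ V}`, `V = ∏ i, {0, …, a_i - 1}`
    (A : Type*) [AddCommGroup A] [Module K A]
    (x : Module.Basis (∀ i, Fin (a i)) K A)
    -- scalars `g_{u,w}` (only the values on pairs away from `0` and `a-1` are used)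
    (g : (∀ i, Fin (a i)) → (∀ i, Fin (a i)) → K)
    -- `v0` is the zero vector and `va` is the vector `a - 1` of `V`
    (v0 va : ∀ i, Fin (a i))
    (hv0 : ∀ i, (v0 i : ℕ) = 0) (hva : ∀ i, (va i : ℕ) = a i - 1)
    (eps : A →ₗ[K] K) (Δ : A →ₗ[K] A ⊗[K] A)
    -- `ε(x_v) = δ_{v,0}`
    (heps : ∀ v : ∀ i, Fin (a i), eps (x v) = if v = v0 then 1 else 0)
    -- `Δ(x_0) = x_0 ⊗ x_0`
    (hΔ0 : Δ (x v0) = x v0 ⊗ₜ[K] x v0)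
    -- `Δ(x_v) = x_0 ⊗ x_v + x_v ⊗ x_0` for `v ∉ {0, a-1}`
    (hΔmid : ∀ v : ∀ i, Fin (a i), v ≠ v0 → v ≠ va →
      Δ (x v) = x v0 ⊗ₜ[K] x v + x v ⊗ₜ[K] x v0)
    -- `Δ(x_{a-1}) = x_0 ⊗ x_{a-1} + x_{a-1} ⊗ x_0 + Σ_{u,w ∉ {0,a-1}} g_{u,w} x_u ⊗ x_w`
    (hΔtop : Δ (x va) = x v0 ⊗ₜ[K] x va + x va ⊗ₜ[K] x v0 +
      ∑ u : ∀ i, Fin (a i), ∑ w : ∀ i, Fin (a i),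
        if u ≠ v0 ∧ u ≠ va ∧ w ≠ v0 ∧ w ≠ va then g u w • (x u ⊗ₜ[K] x w) else 0) :
    -- coassociativity `(Δ ⊗ id) ∘ Δ = (id ⊗ Δ) ∘ Δ`
    (∀ y : A,
      (TensorProduct.assoc K A A A) ((LinearMap.rTensor A Δ) (Δ y)) =
        (LinearMap.lTensor A Δ) (Δ y)) ∧
    -- left counit law `(ε ⊗ id) ∘ Δ = id`
    (∀ y : A, (TensorProduct.lid K A) ((LinearMap.rTensor A eps) (Δ y)) = y) ∧
    -- right counit law `(id ⊗ ε) ∘ Δ = id`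
    (∀ y : A, (TensorProduct.rid K A) ((LinearMap.lTensor A eps) (Δ y)) = y) ∧
    -- the space of primitive elements has dimension at least `(∏ i, a i) - 2`
    ((∏ i : Fin n, a i) - 2 ≤ Module.finrank K
      (LinearMap.ker (Δ - (TensorProduct.mk K A A (x v0) +
        (TensorProduct.mk K A A).flip (x v0))))) := by
  classical
  have hne : v0 ≠ va := fun h => by
    have := congrArg (fun v => (v ⟨0, hn⟩ : ℕ)) h
    simp only [hv0, hva] at this
    have := ha ⟨0, hn⟩
    omega
  let N := primitives Δ (x v0) ⊓ ker eps
  have hmid : ∀ v, v ≠ v0 → v ≠ va → x v ∈ N := fun v h0 ht =>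
    ⟨mem_primitives.2 (hΔmid v h0 ht), by simp [heps, h0]⟩
  have hx : ∀ v, x v = x v0 ∨ eps (x v) = 0 ∧ IsPrimitiveModulo Δ (x v0) N (x v) := by
    intro v
    obtain rfl | h0 := eq_or_ne v v0
    · exact Or.inl rfl
    refine Or.inr ⟨by simp [heps, h0], ?_⟩
    obtain rfl | ht := eq_or_ne v va
    · exact ⟨_, sum_ite_smul_tmul_mem_map₂ g fun u w h =>
        ⟨hmid u h.1 h.2.1, hmid w h.2.2.1 h.2.2.2⟩, hΔtop⟩
    · exact isPrimitiveModulo_of_mem_primitives N (hmid v h0 ht).1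
  have hε : eps (x v0) = 1 := by simp [heps]
  have hx' : ∀ v, x v = x v0 ∨ IsPrimitiveModulo Δ (x v0) N (x v) :=
    fun v => (hx v).imp_right And.right
  have : Module.Finite K A := Module.Finite.of_basis x
  refine ⟨coassoc_of_basis x hΔ0 inf_le_left hx',
    lid_rTensor_comul_of_basis x hΔ0 hε inf_le_right hx,
    rid_lTensor_comul_of_basis x hΔ0 hε inf_le_right hx, ?_⟩
  have hcard : (Finset.univ \ {v0, va}).card = (∏ i : Fin n, a i) - 2 := by
    rw [Finset.card_sdiff_of_subset (Finset.subset_univ _), Finset.card_pair hne]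
    simp [Fintype.card_pi]
  refine hcard ▸ x.linearIndependent.card_le_finrank_of_forall_mem fun v hv => ?_
  simp only [Finset.mem_sdiff, Finset.mem_insert, Finset.mem_singleton, not_or] at hv
  exact (hmid v hv.2.1 hv.2.2).1
end

section
/- Assume char K ≠ 2 and h_{e_i}² = 1 for all 1 ≤ i ≤ n. If π is a compatible permutation with (q,a) satisfying π² = Id, then the set I_3 = {i : π(i) = i, h_{e_i} = −1, and a_i even} has even cardinality. -/
open scoped BigOperators

noncomputable section

theorem stmt15 {K : Type*} [Field K] {n : ℕ} (hn : 1 ≤ n)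
    (hchar : ringChar K ≠ 2)
    (q : Fin n → Fin n → K) (a : Fin n → ℕ)
    (hq0 : ∀ i j, q i j ≠ 0) (hqii : ∀ i, q i i = 1)
    (hqsym : ∀ i j, q i j * q j i = 1) (ha : ∀ i, 2 ≤ a i)
    (hh : ∀ i, (hei q a i) ^ 2 = 1)
    (π : Equiv.Perm (Fin n)) (hcomp : Compatible q a π)
    (hπ2 : ∀ i, π (π i) = i) :
    Even ({i : Fin n | π i = i ∧ hei q a i = -1 ∧ Even (a i)}.ncard) := by
  classical
  obtain ⟨hca, hcq⟩ := hcomp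
  -- hei values are ±1
  have hpm : ∀ i, hei q a i = 1 ∨ hei q a i = -1 := by
    intro i
    have h := hh i
    rw [sq] at h
    exact mul_self_eq_one_iff.mp h
  have hne : (-1 : K) ≠ 1 := Ring.neg_one_ne_one_of_char_ne_two hchar
  -- the double product is 1
  have hP : ∏ i : Fin n, hei q a i ^ (a i - 1) = 1 := by
    have hdp : ∏ p : Fin n × Fin n, q p.1 p.2 ^ ((a p.2 - 1) * (a p.1 - 1)) = 1 := by
      apply Finset.prod_involution (fun p _ => (p.2, p.1))
      · intro p _
        simp only
        rw [mul_comm (a p.1 - 1) (a p.2 - 1), ← mul_pow, hqsym, one_pow]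
      · intro p _ hfp hcontra
        apply hfp
        have h2 : p.2 = p.1 := (Prod.ext_iff.mp hcontra).1
        rw [h2, hqii, one_pow]
      · intro p _; exact Finset.mem_univ _
      · intro p _; rfl
    calc ∏ i : Fin n, hei q a i ^ (a i - 1)
        = ∏ i : Fin n, ∏ j : Fin n, q i j ^ ((a j - 1) * (a i - 1)) := by
          apply Finset.prod_congr rfl
          intro i _
          rw [hei, ← Finset.prod_pow]
          exact Finset.prod_congr rfl fun j _ => (pow_mul _ _ _).symm
      _ = 1 := by rw [← hdp, ← Finset.prod_product', Finset.univ_product_univ]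
  -- hei (π i) = hei i
  have hinv : ∀ i, hei q a (π i) = hei q a i := by
    intro i
    have h1 : hei q a (π i) = ∏ j : Fin n, q j i ^ (a j - 1) := by
      rw [hei, ← Equiv.prod_comp π (fun j => q (π i) j ^ (a j - 1))]
      exact Finset.prod_congr rfl fun j _ => by rw [hcq, hca]
    have h2 : (∏ j : Fin n, q j i ^ (a j - 1)) = (hei q a i)⁻¹ := by
      rw [hei, ← Finset.prod_inv_distrib]
      refine Finset.prod_congr rfl fun j _ => ?_
      rw [← inv_pow]
      congr 1
      exact eq_inv_of_mul_eq_one_left (hqsym j i)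
    rw [h1, h2]
    rcases hpm i with h | h <;> simp [h, inv_neg]
  -- each term is ±1 according to the condition
  have hterm : ∀ i, hei q a i ^ (a i - 1)
      = if hei q a i = -1 ∧ Even (a i) then (-1 : K) else 1 := by
    intro i
    rcases hpm i with h | h
    · rw [if_neg, h, one_pow]
      rintro ⟨h1, -⟩
      rw [h] at h1
      exact hne h1.symm
    · by_cases hev : Even (a i)
      · rw [if_pos ⟨h, hev⟩, h, Odd.neg_one_pow (Nat.Even.sub_odd (by have := ha i; omega) hev odd_one)]
      · rw [if_neg (fun hc => hev hc.2), h, Even.neg_one_pow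
          (Nat.Odd.sub_odd (Nat.not_even_iff_odd.mp hev) odd_one)]
  set T : Finset (Fin n) := Finset.univ.filter (fun i => hei q a i = -1 ∧ Even (a i)) with hT
  have hTcard : Even T.card := by
    have h1 : ∏ i : Fin n, (if hei q a i = -1 ∧ Even (a i) then (-1 : K) else 1)
        = (-1 : K) ^ T.card := by
      rw [Finset.prod_ite, Finset.prod_const, Finset.prod_const, one_pow, mul_one]
    have h2 : ((-1 : K)) ^ T.card = 1 :=
      h1 ▸ (Finset.prod_congr rfl fun i _ => (hterm i).symm).symm ▸ hP
    exact (neg_one_pow_eq_one_iff_even hne).mp h2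
  -- moved points of π inside T come in pairs
  set M : Finset (Fin n) := T.filter (fun i => π i ≠ i) with hM
  have hMmem : ∀ i ∈ M, π i ∈ M := by
    intro i hi
    simp only [hM, hT, Finset.mem_filter, Finset.mem_univ, true_and] at hi ⊢
    exact ⟨⟨(hinv i).symm ▸ hi.1.1, (hca i).symm ▸ hi.1.2⟩, fun h => hi.2 (by rw [← hπ2 i, h, h])⟩
  have hMcard : Even M.card := by
    have h1 : ∏ _i ∈ M, (-1 : K) = 1 := by
      apply Finset.prod_involution (fun i _ => π i)
      · intro i _; simp
      · intro i hi _
        simp only [hM, Finset.mem_filter] at hi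
        exact hi.2
      · exact hMmem
      · intro i _; exact hπ2 i
    rw [Finset.prod_const] at h1
    exact (neg_one_pow_eq_one_iff_even hne).mp h1
  have hsplit : (T.filter (fun i => π i = i)).card + M.card = T.card := by
    rw [hM]
    exact Finset.card_filter_add_card_filter_not _
  have hF : Even (T.filter (fun i => π i = i)).card := by
    obtain ⟨m, hm⟩ := hMcard
    obtain ⟨t, ht⟩ := hTcard
    exact ⟨(T.filter (fun i => π i = i)).card / 2, by omega⟩
  have hset : {i : Fin n | π i = i ∧ hei q a i = -1 ∧ Even (a i)}
      = ↑(T.filter (fun i => π i = i)) := by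
    ext i
    simp only [Set.mem_setOf_eq, Finset.coe_filter, hT, Finset.mem_filter, Finset.mem_univ,
      true_and, Set.mem_setOf_eq]
    tauto
  rw [hset, Set.ncard_coe_finset]
  exact hF
end
end

section
/- Assume char K ≠ 2 and h_{e_i}² = 1 for all 1 ≤ i ≤ n, and let π be a compatible permutation with (q,a) satisfying π² = Id. Define I_1 = {i : π(i) = i, h_{e_i} = 1, a_i even}, I_3 = {i : π(i) = i, h_{e_i} = −1, a_i even}, I_4 = {i : π(i) = i, h_{e_i} = −1, a_i odd}. If I_1 and I_3 are both empty, then I_4 is empty. -/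
open scoped BigOperators

noncomputable section

theorem stmt16 {K : Type*} [Field K] {n : ℕ} (hn : 1 ≤ n)
    (hchar : ringChar K ≠ 2)
    (q : Fin n → Fin n → K) (a : Fin n → ℕ)
    (hq0 : ∀ i j, q i j ≠ 0) (hqii : ∀ i, q i i = 1)
    (hqsym : ∀ i j, q i j * q j i = 1) (ha : ∀ i, 2 ≤ a i)
    (hh : ∀ i, (hei q a i) ^ 2 = 1)
    (π : Equiv.Perm (Fin n)) (hcomp : Compatible q a π)
    (hπ2 : ∀ i, π (π i) = i)
    (hI1 : {i : Fin n | π i = i ∧ hei q a i = 1 ∧ Even (a i)} = ∅)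
    (hI3 : {i : Fin n | π i = i ∧ hei q a i = -1 ∧ Even (a i)} = ∅) :
    {i : Fin n | π i = i ∧ hei q a i = -1 ∧ Odd (a i)} = ∅ := by
  obtain ⟨hca, hcq⟩ := hcomp
  rw [Set.eq_empty_iff_forall_notMem] at hI1 hI3 ⊢
  rintro i ⟨hfix, hneg, hodd⟩
  -- every fixed point of π has odd a
  have hfodd : ∀ j : Fin n, π j = j → Odd (a j) := by
    intro j hj
    by_contra hje
    rw [Nat.not_odd_iff_even] at hje
    have h1 : (hei q a j - 1) * (hei q a j + 1) = 0 := by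
      have := hh j; ring_nf; ring_nf at this; linear_combination this
    rcases mul_eq_zero.mp h1 with h | h
    · exact hI1 j ⟨hj, sub_eq_zero.mp h, hje⟩
    · exact hI3 j ⟨hj, eq_neg_of_add_eq_zero_left h, hje⟩
  -- key: for every j, q i j ^ (a j - 1) * q i (π j) ^ (a (π j) - 1) = 1
  have hkey : ∀ j : Fin n, q i j ^ (a j - 1) * q i (π j) ^ (a (π j) - 1) = 1 := by
    intro j
    have hqij : q i (π j) = q j i := by
      have := hcq i j; rwa [hfix] at this
    rw [hca j, hqij, ← mul_pow, hqsym, one_pow]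
  -- if π j = j and f j ≠ 1 contradiction
  have hfix1 : ∀ j : Fin n, π j = j → q i j ^ (a j - 1) = 1 := by
    intro j hj
    have hsq : q i j ^ 2 = 1 := by
      have hqij : q i j = q j i := by
        have := hcq i j; rwa [hfix, hj] at this
      rw [pow_two]; nth_rewrite 2 [hqij]; exact hqsym i j
    obtain ⟨k, hk⟩ := Nat.Odd.sub_odd (hfodd j hj) odd_one
    rw [hk, ← two_mul, pow_mul, hsq, one_pow]
  have hone : hei q a i = 1 := by
    rw [hei]
    refine Finset.prod_ninvolution (fun j => π j) (fun j => ?_) (fun j hf => ?_)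
      (fun j => Finset.mem_univ _) hπ2
    · exact hkey j
    · intro hj; exact hf (hfix1 j hj)
  rw [hneg] at hone
  exact Ring.neg_one_ne_one_of_char_ne_two hchar hone
end
end

section
/- Assume char K ≠ 2 and h_{e_i}² = 1 for all 1 ≤ i ≤ n, and let π be a compatible permutation with (q,a) satisfying π² = Id. Suppose there exist c_1,…,c_n ∈ K with c_i · c_{π(i)} = h_{e_i} for all i and q_π · ∏_{1 ≤ i ≤ n} c_i^{a_i−1} = 1. If the sets I_1 = {i : π(i) = i, h_{e_i} = 1, a_i even} and I_3 = {i : π(i) = i, h_{e_i} = −1, a_i even} are both empty, then the cardinality of J_3 = {i : π(i) ≠ i, h_{e_i} = −1, a_i even} is divisible by 4. -/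
/-! Since `I₁` and `I₃` are empty, `a_i` is odd at every fixed point of `π`, so the exponents
`a_i - 1` there are even. Pairing every index (or pair of indices) with its image under the
involution `π`, compatibility makes paired factors mutually inverse, while factors at fixed
points square to `1`; hence `h_{e_i} = 1` at fixed points and `q_π = 1`. The relation
`c_i c_{π i} = h_{e_i}` then collapses `∏ c_i^{a_i-1}` to `(-1)^m`, where `m` is the number of
2-cycles of `π` inside `J₃`. So `m` is even and `|J₃| = 2m`. -/

open scoped BigOperators

noncomputable section

open Finset

theorem pow_eq_one_of_mul_self_eq_one {M : Type*} [Monoid M] {x : M} (hx : x * x = 1) {e : ℕ}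
    (he : Even e) : x ^ e = 1 := by
  obtain ⟨k, rfl⟩ := he
  rw [← two_mul, pow_mul, sq, hx, one_pow]

theorem pow_sub_one_eq_ite {R : Type*} [Ring R] [DecidableEq R] (hR : (-1 : R) ≠ 1) {x : R}
    (hx : x = 1 ∨ x = -1) {m : ℕ} (hm : 1 ≤ m) :
    x ^ (m - 1) = if x = -1 ∧ Even m then -1 else 1 := by
  rcases hx with rfl | rfl
  · simp [hR.symm]
  · by_cases h : Even m <;> simp [neg_one_pow_eq_ite, Nat.even_sub hm, h]

namespace Finset

variable {ι M : Type*} [LinearOrder ι] [CommMonoid M] {σ : ι → ι}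

@[to_additive]
theorem prod_eq_prod_filter_fixed_mul_prod_filter_lt (hσ : Function.Involutive σ)
    {s : Finset ι} (hs : ∀ i ∈ s, σ i ∈ s) (f : ι → M) :
    ∏ i ∈ s, f i = (∏ i ∈ s with σ i = i, f i) * ∏ i ∈ s with i < σ i, f i * f (σ i) := by
  have hmoved : {i ∈ s | ¬σ i = i} = {i ∈ s | i < σ i} ∪ {i ∈ s | σ i < i} := by
    ext i; simp only [mem_filter, mem_union]; grind
  have hswap : ∏ i ∈ s with σ i < i, f i = ∏ i ∈ s with i < σ i, f (σ i) :=
    prod_nbij' σ σ (by simp +contextual [hs, hσ _]) (by simp +contextual [hs, hσ _])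
      (fun i _ => hσ i) (fun i _ => hσ i) (fun i _ => by rw [hσ i])
  rw [← prod_filter_mul_prod_filter_not s (fun i => σ i = i), hmoved,
    prod_union (disjoint_filter.2 fun i _ h => not_lt.2 h.le), hswap, prod_mul_distrib]

theorem card_eq_two_mul_card_filter_lt (hσ : Function.Involutive σ) {s : Finset ι}
    (hs : ∀ i ∈ s, σ i ∈ s) (hfix : ∀ i ∈ s, σ i ≠ i) :
    #s = 2 * #{i ∈ s | i < σ i} := by
  rw [card_eq_sum_ones, sum_eq_sum_filter_fixed_add_sum_filter_lt hσ hs,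
    filter_false_of_mem hfix, sum_empty, zero_add, card_eq_sum_ones, mul_sum, mul_one]

end Finset

theorem Finset.prod_pow_sub_one_eq_neg_one_pow {ι R : Type*} [Fintype ι] [LinearOrder ι]
    [CommRing R] [DecidableEq R] (hR : (-1 : R) ≠ 1) {π : ι → ι} (hπ : Function.Involutive π)
    {a : ι → ℕ} (ha : ∀ i, 1 ≤ a i) (haπ : ∀ i, a (π i) = a i)
    (hodd : ∀ i, π i = i → Even (a i - 1)) {h c : ι → R} (hpm : ∀ i, h i = 1 ∨ h i = -1)
    (hfix : ∀ i, π i = i → h i = 1) (hc : ∀ i, c i * c (π i) = h i) :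
    ∏ i, c i ^ (a i - 1) = (-1) ^ #{i | i < π i ∧ h i = -1 ∧ Even (a i)} := by
  have hfixed : ∏ i with π i = i, c i ^ (a i - 1) = 1 := by
    refine prod_eq_one fun i hi => pow_eq_one_of_mul_self_eq_one ?_ (hodd i (mem_filter.1 hi).2)
    simpa [(mem_filter.1 hi).2, hfix i (mem_filter.1 hi).2] using hc i
  have hpair : ∀ i, c i ^ (a i - 1) * c (π i) ^ (a (π i) - 1) =
      if h i = -1 ∧ Even (a i) then -1 else 1 := fun i => by
    rw [haπ, ← mul_pow, hc, pow_sub_one_eq_ite hR (hpm i) (ha i)]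
  rw [prod_eq_prod_filter_fixed_mul_prod_filter_lt hπ (fun i _ => mem_univ _), hfixed, one_mul]
  simp only [hpair, prod_ite, prod_const, one_pow, mul_one, filter_filter]

section

variable {K : Type*} [Field K] {n : ℕ} {q : Fin n → Fin n → K} {a : Fin n → ℕ}
  {π : Equiv.Perm (Fin n)}

theorem qpowZ_eZ_eZ (q : Fin n → Fin n → K) (x y : Fin n) :
    qpowZ q (eZ x) (eZ y) = if y < x then q y x else 1 := by
  unfold qpowZ eZ
  rw [prod_eq_single y (fun i _ hi => prod_eq_one fun l _ => by simp [hi]) (by simp),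
    prod_eq_single x (fun l _ hl => by simp [hl]) (by simp)]
  by_cases h : y < x <;> simp [h]

namespace Compatible

variable (hcomp : Compatible q a π) (hqsym : ∀ i j, q i j * q j i = 1)
include hcomp hqsym

theorem mul_self_eq_one_of_fixed {i j : Fin n} (hi : π i = i) (hj : π j = j) :
    q i j * q i j = 1 := by
  have hji : q j i = q i j := by simpa [hi, hj] using hcomp.2 j i
  nth_rw 2 [← hji]
  exact hqsym i j

theorem hei_apply_mul_hei (i : Fin n) : hei q a (π i) * hei q a i = 1 := by
  have hreindex : hei q a (π i) = ∏ j, q j i ^ (a j - 1) := by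
    rw [hei, ← Equiv.prod_comp π]
    simp only [hcomp.1, hcomp.2]
  rw [hreindex, hei, ← prod_mul_distrib]
  exact prod_eq_one fun j _ => by rw [← mul_pow, hqsym, one_pow]

theorem hei_apply {i : Fin n} (hh : hei q a i ^ 2 = 1) : hei q a (π i) = hei q a i :=
  calc hei q a (π i) = hei q a (π i) * hei q a i ^ 2 := by rw [hh, mul_one]
    _ = hei q a i := by rw [sq, ← mul_assoc, hcomp.hei_apply_mul_hei hqsym, one_mul]

variable (hπ : Function.Involutive π) (hodd : ∀ i, π i = i → Even (a i - 1))
include hπ hodd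

theorem hei_eq_one_of_fixed {i : Fin n} (hi : π i = i) : hei q a i = 1 := by
  refine prod_ninvolution π (fun j => ?_) (fun j hj hfix => hj ?_) (fun _ => mem_univ _) hπ
  · have hq : q i (π j) = q j i := by simpa [hi] using hcomp.2 i j
    rw [hq, hcomp.1, ← mul_pow, hqsym, one_pow]
  · exact pow_eq_one_of_mul_self_eq_one (hcomp.mul_self_eq_one_of_fixed hqsym hi hfix)
      (hodd j hfix)

theorem qPi_eq_one : qPi q a π = 1 := by
  have hrw : qPi q a π = ∏ x : Fin n × Fin n,
      if x.1 < x.2 ∧ π x.1 < π x.2 then q x.2 x.1 ^ ((a x.2 - 1) * (a x.1 - 1)) else 1 := by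
    rw [Fintype.prod_prod_type, qPi]
    refine prod_congr rfl fun j _ => prod_congr rfl fun k _ => ?_
    rw [qpowZ_eZ_eZ, hcomp.2]
    by_cases hjk : j < k <;> by_cases hπjk : π j < π k <;> simp [hjk, hπjk]
  rw [hrw]
  refine prod_ninvolution (Prod.map π π) (fun x => ?_) (fun x hx hfix => hx ?_)
    (fun _ => mem_univ _) (hπ.prodMap hπ)
  · simp only [Prod.map_fst, Prod.map_snd, hπ _, and_comm (a := π x.1 < π x.2)]
    split_ifs
    · rw [hcomp.2, hcomp.1, hcomp.1, ← mul_pow, hqsym, one_pow]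
    · rw [one_mul]
  · have h1 : π x.1 = x.1 := congrArg Prod.fst hfix
    have h2 : π x.2 = x.2 := congrArg Prod.snd hfix
    split_ifs
    · exact pow_eq_one_of_mul_self_eq_one (hcomp.mul_self_eq_one_of_fixed hqsym h2 h1)
        ((hodd _ h2).mul_right _)
    · rfl

end Compatible

end

theorem stmt17_general {K : Type*} [Field K] {n : ℕ}
    (hchar : ringChar K ≠ 2)
    (q : Fin n → Fin n → K) (a : Fin n → ℕ)
    (hqsym : ∀ i j, q i j * q j i = 1) (ha : ∀ i, 2 ≤ a i)
    (hh : ∀ i, (hei q a i) ^ 2 = 1)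
    (π : Equiv.Perm (Fin n)) (hcomp : Compatible q a π)
    (hπ2 : ∀ i, π (π i) = i)
    (c : Fin n → K)
    (hc : ∀ i, c i * c (π i) = hei q a i)
    (hcprod : qPi q a π * ∏ i : Fin n, c i ^ (a i - 1) = 1)
    (hI1 : {i : Fin n | π i = i ∧ hei q a i = 1 ∧ Even (a i)} = ∅)
    (hI3 : {i : Fin n | π i = i ∧ hei q a i = -1 ∧ Even (a i)} = ∅) :
    4 ∣ ({i : Fin n | π i ≠ i ∧ hei q a i = -1 ∧ Even (a i)}.ncard) := by
  classical
  have hR : (-1 : K) ≠ 1 := Ring.neg_one_ne_one_of_char_ne_two hchar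
  have hpm (i : Fin n) : hei q a i = 1 ∨ hei q a i = -1 := sq_eq_one_iff.1 (hh i)
  have hodd (i : Fin n) (hi : π i = i) : Even (a i - 1) := by
    have hnev : ¬Even (a i) := fun hev =>
      (hpm i).elim (fun h1 => hI1.subset ⟨hi, h1, hev⟩) (fun h1 => hI3.subset ⟨hi, h1, hev⟩)
    simpa [Nat.even_sub (one_le_two.trans (ha i))] using hnev
  set J : Finset (Fin n) := {i | π i ≠ i ∧ hei q a i = -1 ∧ Even (a i)}
  have hJ : ∀ i ∈ J, π i ∈ J := by
    intro i
    simp [J, hπ2, hcomp.hei_apply hqsym (hh i), hcomp.1, eq_comm]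
  have hsign : (-1 : K) ^ #{i ∈ J | i < π i} = 1 := by
    rw [hcomp.qPi_eq_one hqsym hπ2 hodd, one_mul,
      prod_pow_sub_one_eq_neg_one_pow hR hπ2 (fun i => one_le_two.trans (ha i)) hcomp.1 hodd hpm
        (fun i => hcomp.hei_eq_one_of_fixed hqsym hπ2 hodd) hc] at hcprod
    convert hcprod using 3
    ext i
    simp only [J, mem_filter, mem_univ, true_and]
    grind
  obtain ⟨m, hm⟩ := (neg_one_pow_eq_one_iff_even hR).1 hsign
  have hcard := card_eq_two_mul_card_filter_lt hπ2 hJ (fun i hi => (mem_filter.1 hi).2.1)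
  rw [← coe_filter_univ, Set.ncard_coe_finset, hcard, hm]
  omega

theorem stmt17 {K : Type*} [Field K] {n : ℕ} (hn : 1 ≤ n)
    (hchar : ringChar K ≠ 2)
    (q : Fin n → Fin n → K) (a : Fin n → ℕ)
    (hq0 : ∀ i j, q i j ≠ 0) (hqii : ∀ i, q i i = 1)
    (hqsym : ∀ i j, q i j * q j i = 1) (ha : ∀ i, 2 ≤ a i)
    (hh : ∀ i, (hei q a i) ^ 2 = 1)
    (π : Equiv.Perm (Fin n)) (hcomp : Compatible q a π)
    (hπ2 : ∀ i, π (π i) = i)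
    (c : Fin n → K)
    (hc : ∀ i, c i * c (π i) = hei q a i)
    (hcprod : qPi q a π * ∏ i : Fin n, c i ^ (a i - 1) = 1)
    (hI1 : {i : Fin n | π i = i ∧ hei q a i = 1 ∧ Even (a i)} = ∅)
    (hI3 : {i : Fin n | π i = i ∧ hei q a i = -1 ∧ Even (a i)} = ∅) :
    4 ∣ ({i : Fin n | π i ≠ i ∧ hei q a i = -1 ∧ Even (a i)}.ncard) :=
  stmt17_general hchar q a hqsym ha hh π hcomp hπ2 c hc hcprod hI1 hI3
end
end

section
/- Assume h_{e_i} = 1 for all 1 ≤ i ≤ n (i.e., A(q,a) is symmetric). If π is a compatible permutation with (q,a) satisfying π² = Id, then there exist c_1,…,c_n ∈ K such that c_i · c_{π(i)} = 1 for all i and q_π · ∏_{1 ≤ i ≤ n} c_i^{a_i−1} = 1. -/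
open scoped BigOperators

noncomputable section

lemma qpowZ_eZ' {K : Type*} [Field K] {n : ℕ} (q : Fin n → Fin n → K) (x y : Fin n) :
    qpowZ q (eZ x) (eZ y) = if y < x then q y x else 1 := by
  unfold qpowZ eZ
  have h1 : ∀ i j : Fin n,
      (if i < j then q i j ^ ((if j = x then (1:ℤ) else 0) * (if i = y then 1 else 0)) else 1)
        = if i = y then (if j = x then (if i < j then q i j else 1) else 1) else 1 := by
    intro i j
    by_cases hi : i = y <;> by_cases hj : j = x <;> by_cases hlt : i < j <;>
      simp [hi, hj, hlt]
  simp only [h1]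
  rw [Finset.prod_eq_single y (by intro b _ hb; simp [hb]) (by simp)]
  simp only [if_pos rfl]
  rw [Finset.prod_eq_single x (by intro b _ hb; simp [hb]) (by simp)]
  simp

theorem stmt19 {K : Type*} [Field K] {n : ℕ} (hn : 1 ≤ n)
    (q : Fin n → Fin n → K) (a : Fin n → ℕ)
    (hq0 : ∀ i j, q i j ≠ 0) (hqii : ∀ i, q i i = 1)
    (hqsym : ∀ i j, q i j * q j i = 1) (ha : ∀ i, 2 ≤ a i)
    (hsymm : ∀ i, hei q a i = 1)
    (π : Equiv.Perm (Fin n)) (hcomp : Compatible q a π)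
    (hπ2 : ∀ i, π (π i) = i) :
    ∃ c : Fin n → K,
      (∀ i, c i * c (π i) = 1) ∧
      qPi q a π * ∏ i : Fin n, c i ^ (a i - 1) = 1 := by
  obtain ⟨hca, hcq⟩ := hcomp
  refine ⟨fun i => ∏ j : Fin n, if i < j ∧ π i < π j then (q i j ^ (a j - 1))⁻¹ else 1, ?_, ?_⟩
  · intro i
    have hre : (∏ j : Fin n, if π i < j ∧ π (π i) < π j then (q (π i) j ^ (a j - 1))⁻¹ else 1)
        = ∏ j : Fin n, if i < j ∧ π i < π j then (q j i ^ (a j - 1))⁻¹ else 1 := by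
      rw [← Equiv.prod_comp π
        (fun j => if π i < j ∧ π (π i) < π j then (q (π i) j ^ (a j - 1))⁻¹ else 1)]
      refine Finset.prod_congr rfl fun j _ => ?_
      rw [hπ2, hπ2, hcq, hca]
      by_cases h1 : i < j <;> by_cases h2 : π i < π j <;> simp [h1, h2]
    dsimp only
    rw [hre, ← Finset.prod_mul_distrib]
    refine Finset.prod_eq_one fun j _ => ?_
    split_ifs with h
    · rw [← mul_inv, ← mul_pow, hqsym, one_pow, inv_one]
    · rw [mul_one]
  · have hqPi : qPi q a π = ∏ j : Fin n, ∏ k : Fin n,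
        if j < k ∧ π j < π k then q j k ^ ((a k - 1) * (a j - 1)) else 1 := by
      unfold qPi
      have step1 : (∏ j : Fin n, ∏ k : Fin n,
          if j < k then (qpowZ q (eZ (π k)) (eZ (π j))) ^ ((a k - 1) * (a j - 1)) else 1)
          = ∏ j : Fin n, ∏ k : Fin n,
          if j < k then (if π j < π k then q (π j) (π k) else 1) ^ ((a k - 1) * (a j - 1)) else 1 := by
        refine Finset.prod_congr rfl fun j _ => Finset.prod_congr rfl fun k _ => ?_
        rw [qpowZ_eZ']
      rw [step1]
      rw [← Equiv.prod_comp π (fun j => ∏ k : Fin n,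
          if j < k then (if π j < π k then q (π j) (π k) else 1) ^ ((a k - 1) * (a j - 1)) else 1)]
      refine Finset.prod_congr rfl fun j _ => ?_
      rw [← Equiv.prod_comp π (fun k =>
          if π j < k then (if π (π j) < π k then q (π (π j)) (π k) else 1)
            ^ ((a k - 1) * (a (π j) - 1)) else 1)]
      refine Finset.prod_congr rfl fun k _ => ?_
      rw [hπ2, hπ2, hca, hca]
      by_cases h1 : j < k <;> by_cases h2 : π j < π k <;> simp [h1, h2]
    have hc : ∀ i : Fin n,
        (∏ j : Fin n, if i < j ∧ π i < π j then (q i j ^ (a j - 1))⁻¹ else 1) ^ (a i - 1)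
          = ∏ j : Fin n, if i < j ∧ π i < π j then (q i j ^ ((a j - 1) * (a i - 1)))⁻¹ else 1 := by
      intro i
      rw [← Finset.prod_pow]
      refine Finset.prod_congr rfl fun j _ => ?_
      split_ifs with h
      · rw [inv_pow, ← pow_mul]
      · exact one_pow _
    simp only [hc, hqPi]
    rw [← Finset.prod_mul_distrib]
    refine Finset.prod_eq_one fun j _ => ?_
    rw [← Finset.prod_mul_distrib]
    refine Finset.prod_eq_one fun k _ => ?_
    split_ifs with h
    · exact mul_inv_cancel₀ (pow_ne_zero _ (hq0 j k))
    · rw [mul_one]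
end
end
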